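/- Let F be a field of characteristic 0, let A = ⊕_{i∈ℕ} ℤ be the free abelian group on basis ε_1, ε_2, …, let T be the F-vector space with basis ∂_1, ∂_2, …, and let φ : T × A → F be the map F-linear in the first variable and additive in the second determined by φ(∂_i, ε_j) = δ_{ij}; let W_∞ = W(A,T,φ) be the corresponding simple generalized Witt algebra. Let s : A → A be the injective group endomorphism determined by s(ε_i) = ε_{i+1} for all i ∈ ℕ. Then the F-linear map Φ : W_∞ → W_∞ determined by Φ(t^α ∂_i) = t^{s(α)} ∂_{i+1} for all α ∈ A and i ∈ ℕ is both a local automorphism and a 2-local automorphism of W_∞, but Φ is not surjective; in particular, Φ is not a Lie algebra automorphism of W_∞. -/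

import Mathlib

/-! Generalized Witt algebras `W(A,T,φ)` over a field `F` of characteristic `0`,
following Djokovic-Zhao. Here `A` is an (additive) abelian group, `T` an
`F`-vector space, and `φ : T × A → F` is `F`-linear in the first variable and
additive in the second (encoded as `φ : T →ₗ[F] (A →+ F)`). -/

namespace GW

variable {F : Type*} [Field F]
variable {A : Type*} [AddCommGroup A]
variable {T : Type*} [AddCommGroup T] [Module F T]
variable (φ : T →ₗ[F] (A →+ F))

/-- The bracket on finitely supported functions `A →₀ T`: the bilinear extension of
`[t^α a, t^β b] = t^(α+β) (φ a β • b - φ b α • a)`. -/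
noncomputable def brk (x y : A →₀ T) : A →₀ T :=
  x.sum fun α a => y.sum fun β b => Finsupp.single (α + β) (φ a β • b - φ b α • a)

lemma brk_zero_left (y : A →₀ T) : brk φ 0 y = 0 := by
  simp [brk]

lemma brk_zero_right (x : A →₀ T) : brk φ x 0 = 0 := by
  simp [brk]

lemma brk_single_single (α β : A) (a b : T) :
    brk φ (Finsupp.single α a) (Finsupp.single β b)
      = Finsupp.single (α + β) (φ a β • b - φ b α • a) := by
  unfold brk
  rw [Finsupp.sum_single_index, Finsupp.sum_single_index]
  · simp
  · simp

lemma brk_add_left (x x' y : A →₀ T) : brk φ (x + x') y = brk φ x y + brk φ x' y := by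
  unfold brk
  rw [Finsupp.sum_add_index']
  · intro α; simp
  · intro α a a'
    rw [← Finsupp.sum_add]
    congr 1
    funext β b
    rw [← Finsupp.single_add]
    congr 1
    simp only [map_add, LinearMap.add_apply, AddMonoidHom.add_apply, add_smul, smul_add]
    abel

lemma brk_add_right (x y y' : A →₀ T) : brk φ x (y + y') = brk φ x y + brk φ x y' := by
  unfold brk
  rw [← Finsupp.sum_add]
  congr 1
  funext α a
  rw [Finsupp.sum_add_index']
  · intro β; simp
  · intro β b b'
    rw [← Finsupp.single_add]
    congr 1
    simp only [map_add, LinearMap.add_apply, AddMonoidHom.add_apply, add_smul, smul_add]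
    abel

lemma brk_neg_swap (x y : A →₀ T) : brk φ y x = - brk φ x y := by
  unfold brk
  rw [Finsupp.sum_comm]
  rw [← Finsupp.sum_neg]
  congr 1
  funext α a
  rw [← Finsupp.sum_neg]
  congr 1
  funext β b
  rw [← Finsupp.single_neg, add_comm β α]
  congr 1
  abel

lemma brk_smul_right (c : F) (x y : A →₀ T) : brk φ x (c • y) = c • brk φ x y := by
  unfold brk
  rw [Finsupp.smul_sum]
  congr 1
  funext α a
  rw [Finsupp.sum_smul_index', Finsupp.smul_sum]
  · congr 1
    funext β b
    rw [Finsupp.smul_single]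
    congr 1
    simp only [map_smul, LinearMap.smul_apply, AddMonoidHom.smul_apply, smul_sub, smul_smul,
      smul_eq_mul]
    rw [mul_comm]
  · intro β; simp

lemma brk_self [CharZero F] (x : A →₀ T) : brk φ x x = 0 := by
  have h : brk φ x x = -brk φ x x := brk_neg_swap φ x x
  have h2 : (2 : F) • brk φ x x = 0 := by
    rw [two_smul]
    nth_rewrite 2 [h]
    simp
  calc brk φ x x = (2 : F)⁻¹ • ((2 : F) • brk φ x x) :=
        (inv_smul_smul₀ two_ne_zero _).symm
    _ = 0 := by rw [h2, smul_zero]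

lemma brk_leibniz (x y z : A →₀ T) :
    brk φ x (brk φ y z) = brk φ (brk φ x y) z + brk φ y (brk φ x z) := by
  induction x using Finsupp.induction_linear with
  | zero => simp [brk_zero_left, brk_zero_right]
  | add f g hf hg =>
      simp only [brk_add_left, brk_add_right, hf, hg]; abel
  | single α a =>
    induction y using Finsupp.induction_linear with
    | zero => simp [brk_zero_left, brk_zero_right]
    | add f g hf hg =>
        simp only [brk_add_left, brk_add_right, hf, hg]; abel
    | single β b =>
      induction z using Finsupp.induction_linear with
      | zero => simp [brk_zero_left, brk_zero_right]
      | add f g hf hg =>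
          simp only [brk_add_left, brk_add_right, hf, hg]; abel
      | single γ c =>
        rw [brk_single_single, brk_single_single, brk_single_single, brk_single_single,
          brk_single_single, brk_single_single]
        rw [show β + (α + γ) = α + β + γ by abel, show α + (β + γ) = α + β + γ by abel,
          ← Finsupp.single_add]
        congr 1
        simp only [map_add, map_sub, map_smul, LinearMap.sub_apply, LinearMap.smul_apply,
          AddMonoidHom.add_apply, AddMonoidHom.sub_apply, AddMonoidHom.smul_apply,
          smul_eq_mul, smul_sub, sub_smul, add_smul, smul_smul]
        ring_nf
        module

variable (F A T) in
/-- The carrier of the generalized Witt algebra `W(A,T,φ)`: finitely supported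
functions from `A` to `T`, where `t^α ∂` corresponds to the function supported
at `α` with value `∂`. -/
@[nolint unusedArguments]
def W (_φ : T →ₗ[F] (A →+ F)) : Type _ := A →₀ T

noncomputable instance : AddCommGroup (W F A T φ) := inferInstanceAs (AddCommGroup (A →₀ T))

noncomputable instance : Module F (W F A T φ) := inferInstanceAs (Module F (A →₀ T))

/-- The element `t^α ∂` of the generalized Witt algebra. -/
noncomputable def tt (α : A) (d : T) : W F A T φ := Finsupp.single α d

/-- The underlying finitely supported function of an element of `W(A,T,φ)`. -/
def toF (x : W F A T φ) : A →₀ T := x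

/-- The Lie ring structure on the generalized Witt algebra `W(A,T,φ)`, with bracket
determined by `[t^α ∂, t^β ∂'] = t^(α+β) (φ(∂,β) • ∂' - φ(∂',α) • ∂)`. -/
noncomputable instance [CharZero F] : LieRing (W F A T φ) :=
  { (inferInstance : AddCommGroup (A →₀ T)) with
    bracket := fun x y => brk φ (toF φ x) (toF φ y)
    add_lie := fun x y z => brk_add_left φ x y z
    lie_add := fun x y z => brk_add_right φ x y z
    lie_self := fun x => brk_self φ x
    leibniz_lie := fun x y z => brk_leibniz φ x y z }

/-- The generalized Witt algebra `W(A,T,φ)` as a Lie algebra over `F`. -/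
noncomputable instance [CharZero F] : LieAlgebra F (W F A T φ) :=
  { (inferInstance : Module F (A →₀ T)) with
    lie_smul := fun c x y => brk_smul_right φ c x y }

@[simp] theorem bracket_tt [CharZero F] (α β : A) (a b : T) :
    ⁅tt φ α a, tt φ β b⁆ = tt φ (α + β) (φ a β • b - φ b α • a) :=
  brk_single_single φ α β a b

/-- Nondegeneracy of the map `φ`. -/
def Nondeg : Prop :=
  (∀ α : A, (∀ d : T, φ d α = 0) → α = 0) ∧ (∀ d : T, (∀ α : A, φ d α = 0) → d = 0)

/-- `(A', T')` is a nondegenerate pair for `φ`. -/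
def NondegPair (A' : AddSubgroup A) (T' : Submodule F T) : Prop :=
  (∀ d ∈ T', (∀ α ∈ A', φ d α = 0) → d = 0) ∧
  (∀ α ∈ A', (∀ d ∈ T', φ d α = 0) → α = 0)

/-- The subset (in fact Lie subalgebra) of `W(A,T,φ)` consisting of the finitely
supported functions supported in `A'` with values in `T'`. -/
def supportedIn (A' : AddSubgroup A) (T' : Submodule F T) : Set (W F A T φ) :=
  {x | (∀ α : A, toF φ x α ∈ T') ∧ ∀ α : A, α ∉ A' → toF φ x α = 0}

end GW

/-- The pairing `φ(∂, α) = Σ_i ∂_i α_i` on `(ℕ →₀ F) × (ℕ →₀ ℤ)`, i.e. the map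
determined by `φ(∂_i, ε_j) = δ_ij`. -/
noncomputable def phiInf (F : Type*) [Field F] :
    (ℕ →₀ F) →ₗ[F] ((ℕ →₀ ℤ) →+ F) where
  toFun d :=
  { toFun := fun α => d.sum fun i c => c * (α i : F)
    map_zero' := by simp
    map_add' := by
      intro α β
      simp only [Finsupp.add_apply, Int.cast_add, mul_add]
      exact Finsupp.sum_add }
  map_add' d d' := by
    refine AddMonoidHom.ext fun α => ?_
    simp only [AddMonoidHom.coe_mk, ZeroHom.coe_mk, AddMonoidHom.add_apply]
    exact Finsupp.sum_add_index' (fun i => by simp) (fun i b₁ b₂ => by ring)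
  map_smul' c d := by
    refine AddMonoidHom.ext fun α => ?_
    simp only [AddMonoidHom.coe_mk, ZeroHom.coe_mk, RingHom.id_apply,
      AddMonoidHom.smul_apply, smul_eq_mul]
    rw [Finsupp.sum_smul_index' (fun i => by simp), Finsupp.mul_sum]
    exact Finsupp.sum_congr fun i _ => by simp [smul_eq_mul]; ring

/-- The generalized Witt algebra `W_∞ = W(⊕_{i∈ℕ} ℤ, ⊕_{i∈ℕ} F, φ)` with
`φ(∂_i, ε_j) = δ_ij`, where `ε_i` (resp. `∂_i`) is `Finsupp.single i 1`. -/
noncomputable abbrev WInf (F : Type*) [Field F] : Type _ :=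
  GW.W F (ℕ →₀ ℤ) (ℕ →₀ F) (phiInf F)

/-! Every element of `W_∞` involves only finitely many indices, all below some `n`. On such
elements `Φ` agrees with the automorphism of `W_∞` that permutes the indices of the `ε_i` and the
`∂_i` simultaneously by the cycle `(0 1 … n)`: a simultaneous permutation preserves `φ`, hence the
bracket. Choosing `n` large enough for two elements at once gives 2-locality. Yet `Φ` is not
surjective: `∂_0` never occurs in its image. -/

namespace GW

variable {F : Type*} [Field F]
variable {A : Type*} [AddCommGroup A] {T : Type*} [AddCommGroup T] [Module F T]
variable {A' : Type*} [AddCommGroup A'] {T' : Type*} [AddCommGroup T'] [Module F T']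
variable (φ : T →ₗ[F] (A →+ F)) (φ' : T' →ₗ[F] (A' →+ F))

noncomputable def ttₗ (α : A) : T →ₗ[F] W F A T φ := Finsupp.lsingle α

@[simp] theorem ttₗ_apply (α : A) (d : T) : ttₗ φ α d = tt φ α d := rfl

@[elab_as_elim]
theorem induction_on_tt {motive : W F A T φ → Prop} (x : W F A T φ) (zero : motive 0)
    (add : ∀ x y, motive x → motive y → motive (x + y)) (tt : ∀ α d, motive (tt φ α d)) :
    motive x :=
  Finsupp.induction_linear (motive := motive) x zero add tt

noncomputable def linearCongr (σ : A ≃+ A') (e : T ≃ₗ[F] T') : W F A T φ ≃ₗ[F] W F A' T' φ' :=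
  Finsupp.lcongr σ.toEquiv e

theorem linearCongr_tt (σ : A ≃+ A') (e : T ≃ₗ[F] T') (α : A) (d : T) :
    linearCongr φ φ' σ e (tt φ α d) = tt φ' (σ α) (e d) :=
  Finsupp.lcongr_single _ _ _ _

variable [CharZero F]

/- The Lie ring structure on `W` does not reuse the additive structure of `W` reducibly, so the
generic `zero_lie`, `add_lie`, ... do not fire on `W`; these restatements do. -/
@[simp] theorem W.zero_lie (y : W F A T φ) : ⁅(0 : W F A T φ), y⁆ = 0 := brk_zero_left φ y

@[simp] theorem W.lie_zero (x : W F A T φ) : ⁅x, (0 : W F A T φ)⁆ = 0 := brk_zero_right φ x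

@[simp] theorem W.add_lie (x x' y : W F A T φ) : ⁅x + x', y⁆ = ⁅x, y⁆ + ⁅x', y⁆ :=
  brk_add_left φ x x' y

@[simp] theorem W.lie_add (x y y' : W F A T φ) : ⁅x, y + y'⁆ = ⁅x, y⁆ + ⁅x, y'⁆ :=
  brk_add_right φ x y y'

theorem map_lie_of_map_lie_tt {L : Type*} [LieRing L] [LieAlgebra F L] (f : W F A T φ →ₗ[F] L)
    (h : ∀ α β a b, f ⁅tt φ α a, tt φ β b⁆ = ⁅f (tt φ α a), f (tt φ β b)⁆)
    (x y : W F A T φ) : f ⁅x, y⁆ = ⁅f x, f y⁆ := by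
  induction x using induction_on_tt with
  | zero => simp
  | add x x' hx hx' => simp [hx, hx']
  | tt α a =>
    induction y using induction_on_tt with
    | zero => simp
    | add y y' hy hy' => simp [hy, hy']
    | tt β b => exact h α β a b

noncomputable def lieCongr (σ : A ≃+ A') (e : T ≃ₗ[F] T') (h : ∀ d α, φ' (e d) (σ α) = φ d α) :
    W F A T φ ≃ₗ⁅F⁆ W F A' T' φ' :=
  let f := linearCongr φ φ' σ e
  { f with
    map_lie' := fun {x y} => map_lie_of_map_lie_tt φ f.toLinearMap (fun α β a b => by
      change f _ = ⁅f _, f _⁆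
      rw [bracket_tt, linearCongr_tt, linearCongr_tt, linearCongr_tt, bracket_tt, map_add,
        map_sub, map_smul, map_smul, h, h]) x y }

end GW

theorem Equiv.Perm.exists_apply_eq_succ_of_lt (n : ℕ) :
    ∃ π : Equiv.Perm ℕ, ∀ i < n, π i = i + 1 := by
  refine ⟨(finRotate (n + 1)).extendDomain Fin.equivSubtype, fun i hi => ?_⟩
  rw [Equiv.Perm.extendDomain_apply_subtype _ _ (b := i) (show i < n + 1 by omega)]
  simp only [Fin.equivSubtype, Equiv.coe_fn_mk, Equiv.coe_fn_symm_mk, finRotate_apply]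
  exact Fin.val_add_one_of_lt (by simpa [Fin.lt_def])

theorem Finsupp.addHom_eq_mapDomain {ι κ : Type*} (s : (ι →₀ ℤ) →+ (κ →₀ ℤ)) (f : ι → κ)
    (hs : ∀ i, s (Finsupp.single i 1) = Finsupp.single (f i) 1) (α : ι →₀ ℤ) :
    s α = α.mapDomain f := by
  suffices s = Finsupp.mapDomain.addMonoidHom f from DFunLike.congr_fun this α
  refine Finsupp.addHom_ext fun i k => ?_
  rw [Finsupp.mapDomain.addMonoidHom_apply, Finsupp.mapDomain_single, ← mul_one k,
    ← Finsupp.smul_single', map_zsmul, hs, Finsupp.smul_single']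

theorem Finsupp.equivMapDomain_eq_mapDomain_of_eqOn {ι κ M : Type*} [AddCommMonoid M]
    (π : ι ≃ κ) (f : ι → κ) (v : ι →₀ M) (h : Set.EqOn π f v.support) :
    v.equivMapDomain π = v.mapDomain f :=
  (Finsupp.equivMapDomain_eq_mapDomain π v).trans (Finsupp.mapDomain_congr h)

theorem phiInf_equivMapDomain (F : Type*) [Field F] (π : Equiv.Perm ℕ) (d : ℕ →₀ F) (α : ℕ →₀ ℤ) :
    phiInf F (d.equivMapDomain π) (α.equivMapDomain π) = phiInf F d α := by
  simp [phiInf, Finsupp.equivMapDomain_apply]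

namespace WInf

variable {F : Type*} [Field F]

variable (F) in
noncomputable def permAut [CharZero F] (π : Equiv.Perm ℕ) : WInf F ≃ₗ⁅F⁆ WInf F :=
  GW.lieCongr (phiInf F) (phiInf F) (Finsupp.domCongr π) (Finsupp.domLCongr π)
    (phiInf_equivMapDomain F π)

/- `map_add` and friends do not apply to `permAut F π` on `W` (see `GW.W.zero_lie`); they do
apply to the underlying linear equivalence. -/
theorem permAut_apply [CharZero F] (π : Equiv.Perm ℕ) (x : WInf F) :
    permAut F π x =
      GW.linearCongr (phiInf F) (phiInf F) (Finsupp.domCongr π) (Finsupp.domLCongr π) x :=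
  rfl

def IsShiftBy (s : (ℕ →₀ ℤ) →+ (ℕ →₀ ℤ)) (Φ : WInf F →ₗ[F] WInf F) : Prop :=
  ∀ (α : ℕ →₀ ℤ) (i : ℕ), Φ (GW.tt (phiInf F) α (Finsupp.single i (1 : F)))
    = GW.tt (phiInf F) (s α) (Finsupp.single (i + 1) (1 : F))

namespace IsShiftBy

variable {s : (ℕ →₀ ℤ) →+ (ℕ →₀ ℤ)} {Φ : WInf F →ₗ[F] WInf F} (hΦ : IsShiftBy s Φ)
include hΦ

theorem apply_tt (α : ℕ →₀ ℤ) (d : ℕ →₀ F) :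
    Φ (GW.tt (phiInf F) α d) = GW.tt (phiInf F) (s α) (d.mapDomain (· + 1)) := by
  suffices Φ ∘ₗ GW.ttₗ (phiInf F) α
      = GW.ttₗ (phiInf F) (s α) ∘ₗ Finsupp.lmapDomain F F (· + 1) from
    LinearMap.congr_fun this d
  refine Finsupp.basisSingleOne.ext fun i => ?_
  simpa using hΦ α i

theorem exists_forall_eq_permAut [CharZero F]
    (hs : ∀ i : ℕ, s (Finsupp.single i 1) = Finsupp.single (i + 1) 1)
    (x : WInf F) :
    ∃ n, ∀ π : Equiv.Perm ℕ, (∀ i < n, π i = i + 1) → Φ x = permAut F π x := by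
  simp only [permAut_apply]
  induction x using GW.induction_on_tt with
  | zero => exact ⟨0, fun π _ => by simp⟩
  | add x y hx hy =>
    obtain ⟨n, hn⟩ := hx
    obtain ⟨m, hm⟩ := hy
    refine ⟨max n m, fun π hπ => ?_⟩
    rw [map_add, map_add, hn π fun i hi => hπ i (by omega), hm π fun i hi => hπ i (by omega)]
  | tt α d =>
    obtain ⟨n, hn⟩ := Finset.exists_nat_subset_range (α.support ∪ d.support)
    refine ⟨n, fun π hπ => ?_⟩
    have hsucc : Set.EqOn π (· + 1) ↑(α.support ∪ d.support) :=
      fun i hi => hπ i (Finset.mem_range.1 (hn hi))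
    rw [hΦ.apply_tt, GW.linearCongr_tt, Finsupp.domLCongr_apply,
      Finsupp.domCongr_apply, Finsupp.domCongr_apply, Finsupp.addHom_eq_mapDomain s _ hs,
      Finsupp.equivMapDomain_eq_mapDomain_of_eqOn _ _ α (hsucc.mono (by simp)),
      Finsupp.equivMapDomain_eq_mapDomain_of_eqOn _ _ d (hsucc.mono (by simp))]

theorem toF_apply_zero_zero (x : WInf F) : GW.toF (phiInf F) (Φ x) 0 0 = 0 := by
  let ev : WInf F →ₗ[F] F := (Finsupp.lapply 0).comp (Finsupp.lapply 0)
  change ev (Φ x) = 0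
  induction x using GW.induction_on_tt with
  | zero => rw [map_zero, map_zero]
  | add x y hx hy => rw [map_add, map_add, hx, hy, add_zero]
  | tt α d =>
    rw [hΦ.apply_tt]
    change Finsupp.single (s α) (d.mapDomain (· + 1)) 0 0 = 0
    rw [Finsupp.single_apply]
    split_ifs
    · exact Finsupp.mapDomain_of_notMem_range _ _ (by simp)
    · rfl

theorem not_surjective : ¬ Function.Surjective Φ := fun h => by
  obtain ⟨x, hx⟩ := h (GW.tt (phiInf F) 0 (Finsupp.single 0 1))
  have := hΦ.toF_apply_zero_zero x
  rw [hx] at this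
  simp [GW.toF, GW.tt] at this

end IsShiftBy

end WInf

/-- Remark 3.4: on `W_∞`, the linear map `Φ` determined by
`Φ(t^α ∂_i) = t^(s α) ∂_(i+1)`, where `s` is the injective endomorphism of
`⊕_{i∈ℕ} ℤ` determined by `s(ε_i) = ε_(i+1)`, is both a local automorphism and a
`2`-local automorphism of `W_∞`, but it is not surjective; in particular it is not a
Lie algebra automorphism of `W_∞`. -/
theorem winf_shift_is_local_and_twoLocal_but_not_aut
    (F : Type*) [Field F] [CharZero F]
    (s : (ℕ →₀ ℤ) →+ (ℕ →₀ ℤ))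
    (hs : ∀ i : ℕ, s (Finsupp.single i 1) = Finsupp.single (i + 1) 1)
    (Φ : WInf F →ₗ[F] WInf F)
    (hΦ : ∀ (α : ℕ →₀ ℤ) (i : ℕ),
      Φ (GW.tt (phiInf F) α (Finsupp.single i (1 : F)))
        = GW.tt (phiInf F) (s α) (Finsupp.single (i + 1) (1 : F))) :
    (∀ x : WInf F, ∃ θ : WInf F ≃ₗ⁅F⁆ WInf F, Φ x = θ x) ∧
    (∀ x y : WInf F, ∃ θ : WInf F ≃ₗ⁅F⁆ WInf F, Φ x = θ x ∧ Φ y = θ y) ∧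
    ¬ Function.Surjective ⇑Φ ∧
    ¬ ∃ θ : WInf F ≃ₗ⁅F⁆ WInf F, ⇑θ = ⇑Φ := by
  have hagree := WInf.IsShiftBy.exists_forall_eq_permAut hΦ hs
  have hnotsurj := WInf.IsShiftBy.not_surjective hΦ
  refine ⟨fun x => ?_, fun x y => ?_, hnotsurj, ?_⟩
  · obtain ⟨n, hn⟩ := hagree x
    obtain ⟨π, hπ⟩ := Equiv.Perm.exists_apply_eq_succ_of_lt n
    exact ⟨WInf.permAut F π, hn π hπ⟩
  · obtain ⟨n, hn⟩ := hagree x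
    obtain ⟨m, hm⟩ := hagree y
    obtain ⟨π, hπ⟩ := Equiv.Perm.exists_apply_eq_succ_of_lt (max n m)
    exact ⟨WInf.permAut F π, hn π fun i hi => hπ i (by omega),
      hm π fun i hi => hπ i (by omega)⟩
  · rintro ⟨θ, hθ⟩
    exact hnotsurj (hθ ▸ θ.surjective)
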